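/- Let k > 1/2 and let φ be smooth with c ≤ φ(ξ)/ξ ≤ C on (0,1]. Suppose φ, u are smooth on (0,1] and satisfy φ_t + (φ/ξ)^{2k} u_ξ = 0. Then V*(ξ^k u) = ξ^k ∂_t φ, and VV*(ξ^k u) = (φ^{2k+1}/ξ^k) ∂_ξ(∂_tφ/φ) + V(ξ^k φ) (∂_tφ/φ), where V(f) = ξ^{-k} ∂_ξ(φ^{2k} ξ^{-k} f) and V*(g) = −φ^{2k} ξ^{-k} ∂_ξ(ξ^{-k} g). -/

import Mathlib

open MeasureTheory Set

/-- `V(f)(ξ) = ξ^{-k} ∂_ξ(φ^{2k} ξ^{-k} f)`. -/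
noncomputable def Vop (k : ℝ) (φ f : ℝ → ℝ) (ξ : ℝ) : ℝ :=
  ξ ^ (-k) * deriv (fun x => φ x ^ (2 * k) * x ^ (-k) * f x) ξ

/-- `V*(g)(ξ) = -φ^{2k} ξ^{-k} ∂_ξ(ξ^{-k} g)`. -/
noncomputable def Vstar (k : ℝ) (φ g : ℝ → ℝ) (ξ : ℝ) : ℝ :=
  -(φ ξ ^ (2 * k)) * ξ ^ (-k) * deriv (fun x => x ^ (-k) * g x) ξ

/-- via the continuity equation `φ_t + (φ/ξ)^{2k} u_ξ = 0`, one has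
`V*(ξ^k u) = ξ^k ∂_tφ` and
`VV*(ξ^k u) = (φ^{2k+1}/ξ^k) ∂_ξ(∂_tφ/φ) + V(ξ^kφ) (∂_tφ/φ)`. -/
theorem continuity_equation_identities (k : ℝ) (hk : 1 / 2 < k)
    (φ u : ℝ → ℝ → ℝ) (c C : ℝ) (hc : 0 < c) (hcC : c ≤ C)
    (hφ : ContDiff ℝ (⊤ : ℕ∞) (fun p : ℝ × ℝ => φ p.1 p.2))
    (hu : ContDiff ℝ (⊤ : ℕ∞) (fun p : ℝ × ℝ => u p.1 p.2))
    (hb : ∀ t : ℝ, ∀ ξ ∈ Ioc (0:ℝ) 1, c ≤ φ t ξ / ξ ∧ φ t ξ / ξ ≤ C)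
    (heq : ∀ t : ℝ, ∀ ξ ∈ Ioc (0:ℝ) 1,
      deriv (fun s => φ s ξ) t + (φ t ξ / ξ) ^ (2 * k) * deriv (fun x => u t x) ξ = 0) :
    ∀ t : ℝ, ∀ ξ ∈ Ioo (0:ℝ) 1,
      (Vstar k (φ t) (fun x => x ^ k * u t x) ξ = ξ ^ k * deriv (fun s => φ s ξ) t)
      ∧ (Vop k (φ t) (Vstar k (φ t) (fun x => x ^ k * u t x)) ξ
        = (φ t ξ ^ (2 * k + 1) / ξ ^ k) *
            deriv (fun x => deriv (fun s => φ s x) t / φ t x) ξ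
          + Vop k (φ t) (fun x => x ^ k * φ t x) ξ * (deriv (fun s => φ s ξ) t / φ t ξ)) := by
  intro t ξ hξ
  set F : ℝ × ℝ → ℝ := fun p => φ p.1 p.2 with hFdef
  set g1 : ℝ → ℝ := fun x => fderiv ℝ F (t, x) (1, 0) with hg1def
  have hFd : Differentiable ℝ F := hφ.differentiable (by simp)
  have hg1eq : ∀ x : ℝ, deriv (fun s => φ s x) t = g1 x := by
    intro x
    have hL : HasDerivAt (fun s : ℝ => (s, x)) ((1 : ℝ), (0 : ℝ)) t :=
      (hasDerivAt_id t).prodMk (hasDerivAt_const t x)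
    exact ((hFd (t, x)).hasFDerivAt.comp_hasDerivAt t hL).deriv
  have hg1 : ContDiff ℝ (⊤ : ℕ∞) g1 :=
    ((hφ.fderiv_right (by simp)).comp (contDiff_const.prodMk contDiff_id)).clm_apply contDiff_const
  have hφt : ContDiff ℝ (⊤ : ℕ∞) (fun x => φ t x) :=
    hφ.comp (contDiff_const.prodMk contDiff_id)
  have hpos : ∀ x ∈ Ioo (0:ℝ) 1, 0 < φ t x := by
    intro x hx
    have h1 : 0 < φ t x / x := lt_of_lt_of_le hc (hb t x ⟨hx.1, hx.2.le⟩).1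
    have h2 := mul_pos h1 hx.1
    rwa [div_mul_cancel₀ _ (ne_of_gt hx.1)] at h2
  have key1 : ∀ x ∈ Ioo (0:ℝ) 1,
      Vstar k (φ t) (fun y => y ^ k * u t y) x = x ^ k * g1 x := by
    intro x hx
    have hxpos := hx.1
    have hev : (fun y : ℝ => y ^ (-k) * (y ^ k * u t y)) =ᶠ[nhds x] (fun y => u t y) := by
      filter_upwards [Ioo_mem_nhds hx.1 hx.2] with y hy
      rw [← mul_assoc, ← Real.rpow_add hy.1]
      norm_num
    have hd : deriv (fun y : ℝ => y ^ (-k) * (y ^ k * u t y)) x = deriv (fun y => u t y) x :=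
      hev.deriv_eq
    have he := heq t x ⟨hx.1, hx.2.le⟩
    have hg : g1 x = -((φ t x / x) ^ (2 * k) * deriv (fun y => u t y) x) := by
      rw [← hg1eq x]; linarith
    simp only [Vstar, hd, hg]
    rw [Real.div_rpow (hpos x hx).le hxpos.le]
    have h2k : x ^ (2 * k) = x ^ k * x ^ k := by
      rw [two_mul, Real.rpow_add hxpos]
    have hA : x ^ k ≠ 0 := (Real.rpow_pos_of_pos hxpos k).ne'
    rw [Real.rpow_neg hxpos.le, h2k]
    field_simp
  have hposξ := hpos ξ hξ
  refine ⟨by rw [hg1eq ξ]; exact key1 ξ hξ, ?_⟩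
  have hPd : DifferentiableAt ℝ (fun x => φ t x ^ (2 * k + 1)) ξ :=
    (hφt.differentiable (by simp) ξ).rpow_const (Or.inl hposξ.ne')
  have hhd : DifferentiableAt ℝ (fun x => g1 x / φ t x) ξ :=
    (hg1.differentiable (by simp) ξ).div (hφt.differentiable (by simp) ξ) hposξ.ne'
  have key2 : (fun x => φ t x ^ (2 * k) * x ^ (-k) * Vstar k (φ t) (fun y => y ^ k * u t y) x)
      =ᶠ[nhds ξ] fun x => φ t x ^ (2 * k + 1) * (g1 x / φ t x) := by
    filter_upwards [Ioo_mem_nhds hξ.1 hξ.2] with x hx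
    rw [key1 x hx]
    have hpx := hpos x hx
    have e1 : φ t x ^ (2 * k + 1) = φ t x ^ (2 * k) * φ t x := by
      rw [Real.rpow_add hpx, Real.rpow_one]
    have e2 : x ^ (-k) * (x ^ k * g1 x) = g1 x := by
      rw [← mul_assoc, ← Real.rpow_add hx.1]
      norm_num
    rw [mul_assoc, e2, e1]
    field_simp
  have key3 : (fun x => φ t x ^ (2 * k) * x ^ (-k) * (x ^ k * φ t x))
      =ᶠ[nhds ξ] fun x => φ t x ^ (2 * k + 1) := by
    filter_upwards [Ioo_mem_nhds hξ.1 hξ.2] with x hx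
    have hpx := hpos x hx
    have e1 : φ t x ^ (2 * k + 1) = φ t x ^ (2 * k) * φ t x := by
      rw [Real.rpow_add hpx, Real.rpow_one]
    have e2 : x ^ (-k) * (x ^ k * φ t x) = φ t x := by
      rw [← mul_assoc, ← Real.rpow_add hx.1]
      norm_num
    rw [mul_assoc, e2, e1]
  have hrw : (fun x => deriv (fun s => φ s x) t / φ t x) = fun x => g1 x / φ t x := by
    funext x; rw [hg1eq x]
  simp only [Vop, hrw, hg1eq ξ]
  rw [key2.deriv_eq, key3.deriv_eq, deriv_fun_mul hPd hhd, Real.rpow_neg hξ.1.le,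
    div_eq_mul_inv]
  ring
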